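/- Optimality of the Riccati-based Gramian for the LQR SDP: let A be n×n, B be n×m, Q symmetric n×n, R symmetric positive definite m×m, x_0 ∈ ℝⁿ. Suppose the symmetric matrix P̂ satisfies AᵀP̂ + P̂A + Q − P̂BR⁻¹BᵀP̂ = 0 with K̂ = −R⁻¹BᵀP̂, and Z₁₁ ⪰ 0 satisfies x_0x_0ᵀ + (A+BK̂)Z₁₁ + Z₁₁(A+BK̂)ᵀ = 0. Then Ẑ = [I; K̂] Z₁₁ [I; K̂]ᵀ is positive semidefinite, its blocks satisfy x_0x_0ᵀ + AẐ₁₁ + BẐ₁₂ᵀ + Ẑ₁₁Aᵀ + Ẑ₁₂Bᵀ = 0, Tr(Q Ẑ₁₁) + Tr(R Ẑ₂₂) = x_0ᵀP̂x_0, and every positive semidefinite Z satisfying x_0x_0ᵀ + AZ₁₁ + BZ₁₂ᵀ + Z₁₁Aᵀ + Z₁₂Bᵀ = 0 has Tr(Q Z₁₁) + Tr(R Z₂₂) ≥ x_0ᵀP̂x_0. -/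

import Mathlib

/-!
With `K = -R⁻¹BᵀP` the Riccati equation reads `AᵀP + PA + Q = KᵀRK`, and completing the square
gives, for every block matrix `W = [W₁₁ W₁₂; W₁₂ᵀ W₂₂]` and `L = [-K I]`,

  `Tr(Q W₁₁) + Tr(R W₂₂) + Tr(P (A W₁₁ + B W₁₂ᵀ + W₁₁ Aᵀ + W₁₂ Bᵀ)) = Tr(R · L W Lᵀ)`.

On the feasible set the trace against `P` equals `-x₀ᵀPx₀`, so the cost exceeds `x₀ᵀPx₀` by
`Tr(R · L W Lᵀ) ≥ 0`. The candidate `Ẑ = S Z₁₁ Sᵀ` with `S = [I; K]` is feasible by the closed-loop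
Lyapunov equation, and `L S = 0` makes the gap vanish.
-/

open Matrix

section Algebra

variable {α n m : Type*} [CommRing α] [Fintype n] [Fintype m]

lemma trace_mul_vecMulVec_self (P : Matrix n n α) (x : n → α) :
    (P * vecMulVec x x).trace = x ⬝ᵥ P *ᵥ x := by
  rw [mul_vecMulVec, trace_vecMulVec, dotProduct_comm]

lemma fromCols_neg_one_mul_fromRows_one [DecidableEq n] [DecidableEq m] (K : Matrix m n α) :
    fromCols (-K) (1 : Matrix m m α) * fromRows (1 : Matrix n n α) K = 0 := by
  simp [fromCols_mul_fromRows]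

lemma fromCols_neg_one_mul_fromBlocks_mul_transpose [DecidableEq m] (K : Matrix m n α)
    (W₁₁ : Matrix n n α) (W₁₂ : Matrix n m α) (W₂₂ : Matrix m m α) :
    fromCols (-K) (1 : Matrix m m α) * fromBlocks W₁₁ W₁₂ W₁₂ᵀ W₂₂
        * (fromCols (-K) (1 : Matrix m m α))ᵀ
      = K * W₁₁ * Kᵀ - W₁₂ᵀ * Kᵀ - K * W₁₂ + W₂₂ := by
  rw [transpose_fromCols, fromCols_mul_fromBlocks, fromCols_mul_fromRows]
  simp only [transpose_one, Matrix.neg_mul, Matrix.mul_neg, Matrix.one_mul, Matrix.mul_one,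
    transpose_neg, Matrix.add_mul]
  abel

omit [Fintype m] in
lemma fromRows_one_mul_mul_transpose [DecidableEq n] (K : Matrix m n α) {Z : Matrix n n α}
    (hZ : Zᵀ = Z) :
    fromRows (1 : Matrix n n α) K * Z * (fromRows 1 K)ᵀ
      = fromBlocks Z (Z * Kᵀ) (Z * Kᵀ)ᵀ (K * Z * Kᵀ) := by
  rw [transpose_fromRows, fromRows_mul, fromRows_mul_fromCols]
  simp [transpose_mul, hZ]

lemma transpose_mul_mul_neg_inv_mul_mul [DecidableEq m] {P : Matrix n n α}
    {B : Matrix n m α} {R : Matrix m m α} (hP : Pᵀ = P) (hR : Rᵀ = R) (hRdet : IsUnit R.det) :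
    (-(R⁻¹ * Bᵀ * P))ᵀ * R * -(R⁻¹ * Bᵀ * P) = P * B * R⁻¹ * Bᵀ * P := by
  rw [Matrix.mul_assoc, Matrix.mul_neg, Matrix.mul_assoc R⁻¹, mul_nonsing_inv_cancel_left _ _ hRdet]
  simp [transpose_mul, transpose_nonsing_inv, hP, hR, Matrix.mul_assoc]

variable {A P Q : Matrix n n α} {B : Matrix n m α} {R : Matrix m m α} {K : Matrix m n α}

lemma lqr_cost_add_trace_mul_lyapunov (hP : Pᵀ = P) (hR : Rᵀ = R)
    (hK : Bᵀ * P = -(R * K)) (hARE : Aᵀ * P + P * A + Q = Kᵀ * R * K)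
    (W₁₁ : Matrix n n α) (W₁₂ : Matrix n m α) (W₂₂ : Matrix m m α) :
    (Q * W₁₁).trace + (R * W₂₂).trace
        + (P * (A * W₁₁ + B * W₁₂ᵀ + W₁₁ * Aᵀ + W₁₂ * Bᵀ)).trace
      = (R * (K * W₁₁ * Kᵀ - W₁₂ᵀ * Kᵀ - K * W₁₂ + W₂₂)).trace := by
  have hPB : P * B = -(Kᵀ * R) := by
    simpa [transpose_mul, hP, hR] using congrArg transpose hK
  have hQ : (Kᵀ * R * K * W₁₁).trace
      = (Aᵀ * P * W₁₁).trace + (P * (A * W₁₁)).trace + (Q * W₁₁).trace := by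
    rw [← hARE, Matrix.add_mul, Matrix.add_mul, trace_add, trace_add, Matrix.mul_assoc P]
  have h1 : (P * (W₁₁ * Aᵀ)).trace = (Aᵀ * P * W₁₁).trace := by
    rw [trace_mul_cycle', Matrix.mul_assoc]
  have h2 : (P * (B * W₁₂ᵀ)).trace = -(R * (W₁₂ᵀ * Kᵀ)).trace := by
    rw [← Matrix.mul_assoc, hPB, Matrix.neg_mul, trace_neg, trace_mul_cycle, trace_mul_comm R]
  have h3 : (P * (W₁₂ * Bᵀ)).trace = -(R * (K * W₁₂)).trace := by
    rw [trace_mul_cycle', ← Matrix.mul_assoc, hK, Matrix.neg_mul, trace_neg, Matrix.mul_assoc]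
  have h4 : (R * (K * W₁₁ * Kᵀ)).trace = (Kᵀ * R * K * W₁₁).trace := by
    rw [trace_mul_cycle']
    simp only [Matrix.mul_assoc]
  simp only [Matrix.mul_add, Matrix.mul_sub, trace_add, trace_sub]
  linear_combination h1 + h2 + h3 - h4 - hQ

lemma lqr_cost_eq_add_trace_of_feasible [DecidableEq m] (hP : Pᵀ = P) (hR : Rᵀ = R)
    (hK : Bᵀ * P = -(R * K)) (hARE : Aᵀ * P + P * A + Q = Kᵀ * R * K) {x : n → α}
    {W₁₁ : Matrix n n α} {W₁₂ : Matrix n m α} (W₂₂ : Matrix m m α)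
    (hW : vecMulVec x x + A * W₁₁ + B * W₁₂ᵀ + W₁₁ * Aᵀ + W₁₂ * Bᵀ = 0) :
    (Q * W₁₁).trace + (R * W₂₂).trace
      = x ⬝ᵥ P *ᵥ x + (R * (fromCols (-K) (1 : Matrix m m α) * fromBlocks W₁₁ W₁₂ W₁₂ᵀ W₂₂
          * (fromCols (-K) (1 : Matrix m m α))ᵀ)).trace := by
  have hLyap : A * W₁₁ + B * W₁₂ᵀ + W₁₁ * Aᵀ + W₁₂ * Bᵀ = -vecMulVec x x :=
    eq_neg_of_add_eq_zero_right (by simpa only [add_assoc] using hW)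
  rw [fromCols_neg_one_mul_fromBlocks_mul_transpose,
    ← lqr_cost_add_trace_mul_lyapunov hP hR hK hARE, hLyap, Matrix.mul_neg, trace_neg,
    trace_mul_vecMulVec_self]
  ring

end Algebra

open scoped ComplexOrder MatrixOrder in
lemma Matrix.PosSemidef.trace_mul_nonneg {𝕜 n : Type*} [RCLike 𝕜] [Fintype n]
    {A B : Matrix n n 𝕜} (hA : A.PosSemidef) (hB : B.PosSemidef) : 0 ≤ (A * B).trace := by
  classical
  obtain ⟨C, rfl⟩ := CStarAlgebra.nonneg_iff_eq_star_mul_self.mp hA.nonneg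
  rw [star_eq_conjTranspose, Matrix.mul_assoc, trace_mul_comm]
  exact (hB.mul_mul_conjTranspose_same C).trace_nonneg

lemma Matrix.PosSemidef.mul_mul_transpose_same {n m : Type*} [Fintype n] [Fintype m]
    {A : Matrix n n ℝ} (hA : A.PosSemidef) (B : Matrix m n ℝ) : (B * A * Bᵀ).PosSemidef :=
  conjTranspose_eq_transpose_of_trivial B ▸ hA.mul_mul_conjTranspose_same B

theorem lqr_riccati_gramian_optimal_general {n m : ℕ}
    (A : Matrix (Fin n) (Fin n) ℝ) (B : Matrix (Fin n) (Fin m) ℝ)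
    (Q : Matrix (Fin n) (Fin n) ℝ)
    (R : Matrix (Fin m) (Fin m) ℝ) (hR : R.PosDef)
    (x0 : Fin n → ℝ)
    (P : Matrix (Fin n) (Fin n) ℝ) (hP : P.IsSymm)
    (hARE : Aᵀ * P + P * A + Q - P * B * R⁻¹ * Bᵀ * P = 0)
    (Z₁₁ : Matrix (Fin n) (Fin n) ℝ) (hZ₁₁ : Z₁₁.PosSemidef)
    (hLyap : vecMulVec x0 x0 + (A + B * (-(R⁻¹ * Bᵀ * P))) * Z₁₁
      + Z₁₁ * (A + B * (-(R⁻¹ * Bᵀ * P)))ᵀ = 0) :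
    (let K := -(R⁻¹ * Bᵀ * P)
     let S : Matrix (Fin n ⊕ Fin m) (Fin n) ℝ :=
       fromRows (1 : Matrix (Fin n) (Fin n) ℝ) K
     let Zh := S * Z₁₁ * Sᵀ
     Zh.PosSemidef ∧
       (vecMulVec x0 x0 + A * Zh.toBlocks₁₁ + B * (Zh.toBlocks₁₂)ᵀ
         + Zh.toBlocks₁₁ * Aᵀ + Zh.toBlocks₁₂ * Bᵀ = 0) ∧
       ((Q * Zh.toBlocks₁₁).trace + (R * Zh.toBlocks₂₂).trace = x0 ⬝ᵥ P *ᵥ x0) ∧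
       (∀ (W₁₁ : Matrix (Fin n) (Fin n) ℝ) (W₁₂ : Matrix (Fin n) (Fin m) ℝ)
          (W₂₂ : Matrix (Fin m) (Fin m) ℝ),
          (fromBlocks W₁₁ W₁₂ W₁₂ᵀ W₂₂).PosSemidef →
          vecMulVec x0 x0 + A * W₁₁ + B * W₁₂ᵀ + W₁₁ * Aᵀ + W₁₂ * Bᵀ = 0 →
          x0 ⬝ᵥ P *ᵥ x0 ≤ (Q * W₁₁).trace + (R * W₂₂).trace)) := by
  intro K S Zh
  have hRdet : IsUnit R.det := (isUnit_iff_isUnit_det R).mp hR.isUnit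
  have hRT : Rᵀ = R := hR.isHermitian
  have hZT : Z₁₁ᵀ = Z₁₁ := hZ₁₁.isHermitian
  have hK : Bᵀ * P = -(R * K) := by
    rw [Matrix.mul_neg, Matrix.mul_assoc, mul_nonsing_inv_cancel_left _ _ hRdet, neg_neg]
  have hARE' : Aᵀ * P + P * A + Q = Kᵀ * R * K := by
    rw [transpose_mul_mul_neg_inv_mul_mul hP hRT hRdet]
    exact sub_eq_zero.mp hARE
  have hZh : Zh = fromBlocks Z₁₁ (Z₁₁ * Kᵀ) (Z₁₁ * Kᵀ)ᵀ (K * Z₁₁ * Kᵀ) :=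
    fromRows_one_mul_mul_transpose K hZT
  have hfeas : vecMulVec x0 x0 + A * Z₁₁ + B * (Z₁₁ * Kᵀ)ᵀ + Z₁₁ * Aᵀ + Z₁₁ * Kᵀ * Bᵀ = 0 := by
    have hLyapK : vecMulVec x0 x0 + (A + B * K) * Z₁₁ + Z₁₁ * (A + B * K)ᵀ = 0 := hLyap
    rw [← hLyapK, transpose_mul, hZT]
    simp only [Matrix.add_mul, Matrix.mul_add, transpose_add, transpose_mul, transpose_transpose,
      Matrix.mul_assoc]
    abel
  have hgap : fromCols (-K) (1 : Matrix (Fin m) (Fin m) ℝ) * Zh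
      * (fromCols (-K) (1 : Matrix (Fin m) (Fin m) ℝ))ᵀ = 0 := by
    simp only [Zh, S, ← Matrix.mul_assoc, fromCols_neg_one_mul_fromRows_one, Matrix.zero_mul]
  refine ⟨hZ₁₁.mul_mul_transpose_same S, ?_, ?_, fun W₁₁ W₁₂ W₂₂ hW hWfeas => ?_⟩
  · simpa only [hZh, toBlocks_fromBlocks₁₁, toBlocks_fromBlocks₁₂] using hfeas
  · rw [hZh, toBlocks_fromBlocks₁₁, toBlocks_fromBlocks₂₂,
      lqr_cost_eq_add_trace_of_feasible hP hRT hK hARE' _ hfeas, ← hZh, hgap, Matrix.mul_zero,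
      trace_zero, add_zero]
  · rw [lqr_cost_eq_add_trace_of_feasible hP hRT hK hARE' W₂₂ hWfeas, le_add_iff_nonneg_right]
    exact hR.posSemidef.trace_mul_nonneg (hW.mul_mul_transpose_same _)

/-- Optimality of the Riccati-based Gramian for the LQR SDP. -/
theorem lqr_riccati_gramian_optimal {n m : ℕ}
    (A : Matrix (Fin n) (Fin n) ℝ) (B : Matrix (Fin n) (Fin m) ℝ)
    (Q : Matrix (Fin n) (Fin n) ℝ) (hQ : Q.IsSymm)
    (R : Matrix (Fin m) (Fin m) ℝ) (hR : R.PosDef) (hRsymm : R.IsSymm)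
    (x0 : Fin n → ℝ)
    (P : Matrix (Fin n) (Fin n) ℝ) (hP : P.IsSymm)
    (hARE : Aᵀ * P + P * A + Q - P * B * R⁻¹ * Bᵀ * P = 0)
    (Z₁₁ : Matrix (Fin n) (Fin n) ℝ) (hZ₁₁ : Z₁₁.PosSemidef)
    (hLyap : vecMulVec x0 x0 + (A + B * (-(R⁻¹ * Bᵀ * P))) * Z₁₁
      + Z₁₁ * (A + B * (-(R⁻¹ * Bᵀ * P)))ᵀ = 0) :
    (let K := -(R⁻¹ * Bᵀ * P)
     let S : Matrix (Fin n ⊕ Fin m) (Fin n) ℝ :=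
       fromRows (1 : Matrix (Fin n) (Fin n) ℝ) K
     let Zh := S * Z₁₁ * Sᵀ
     Zh.PosSemidef ∧
       (vecMulVec x0 x0 + A * Zh.toBlocks₁₁ + B * (Zh.toBlocks₁₂)ᵀ
         + Zh.toBlocks₁₁ * Aᵀ + Zh.toBlocks₁₂ * Bᵀ = 0) ∧
       ((Q * Zh.toBlocks₁₁).trace + (R * Zh.toBlocks₂₂).trace = x0 ⬝ᵥ P *ᵥ x0) ∧
       (∀ (W₁₁ : Matrix (Fin n) (Fin n) ℝ) (W₁₂ : Matrix (Fin n) (Fin m) ℝ)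
          (W₂₂ : Matrix (Fin m) (Fin m) ℝ),
          (fromBlocks W₁₁ W₁₂ W₁₂ᵀ W₂₂).PosSemidef →
          vecMulVec x0 x0 + A * W₁₁ + B * W₁₂ᵀ + W₁₁ * Aᵀ + W₁₂ * Bᵀ = 0 →
          x0 ⬝ᵥ P *ᵥ x0 ≤ (Q * W₁₁).trace + (R * W₂₂).trace)) :=
  lqr_riccati_gramian_optimal_general A B Q R hR x0 P hP hARE Z₁₁ hZ₁₁ hLyap
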